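/- Let I be a symmetric positive-definite d×d matrix with block decomposition I = [[G_1, G_2],[ᵗG_2, G_3]] (G_1 of size r×r), H := [[0,0],[0, G_3^{-1}]], and let I^{1/2} be the positive-definite symmetric square root of I. Then I^{1/2} (I^{-1} − H) I^{1/2} is an orthogonal projection matrix of rank r; in particular it is symmetric and idempotent. -/

import Mathlib

/-!
Write `Q = I^{1/2}` and `P = I⁻¹ - H`. Since `H I H = H`, expanding gives `P I P = P`, so
`(Q P Q)² = Q P (Q Q) P Q = Q P I P Q = Q P Q`; symmetry of `Q P Q` comes from that of `Q`, `I⁻¹`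
and `G₃⁻¹`. For the rank, `Q` and `I` are invertible, so `rank (Q P Q) = rank (P I)`, and
`P I = 1 - H I = [[1, 0], [-G₃⁻¹ ᵗG₂, 0]]` has rank `r`.
-/

open Matrix

open scoped ComplexOrder in
/-- The square root of a positive semidefinite matrix, as defined in the older Mathlib
(`Matrix.PosSemidef.sqrt`, since removed). -/
noncomputable def Matrix.PosSemidef.sqrt {n 𝕜 : Type*} [Fintype n] [DecidableEq n] [RCLike 𝕜]
    {A : Matrix n n 𝕜} (hA : A.PosSemidef) : Matrix n n 𝕜 :=
  hA.1.eigenvectorUnitary.1 * diagonal ((↑) ∘ (√·) ∘ hA.1.eigenvalues) *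
    (star hA.1.eigenvectorUnitary : Matrix n n 𝕜)

theorem isIdempotentElem_mul_mul_of_mul_mul_mul_eq {S : Type*} [Semigroup S] {q m : S}
    (h : m * (q * q) * m = m) : IsIdempotentElem (q * m * q) := by
  calc q * m * q * (q * m * q) = q * (m * (q * q) * m) * q := by simp only [mul_assoc]
    _ = q * m * q := by rw [h]

theorem sub_mul_mul_sub_of_mul_mul_eq_self {R : Type*} [Ring R] {a b h : R} (hab : a * b = 1)
    (hba : b * a = 1) (hh : h * a * h = h) : (b - h) * a * (b - h) = b - h := by
  calc (b - h) * a * (b - h) = b * a * b - b * a * h - h * (a * b) + h * a * h := by noncomm_ring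
    _ = b - h := by rw [hab, hba, hh, one_mul, one_mul, mul_one]; abel

open scoped ComplexOrder

namespace Matrix

section Sqrt

variable {n : Type*} [Fintype n] [DecidableEq n]

section RCLike

variable {𝕜 : Type*} [RCLike 𝕜] {A : Matrix n n 𝕜}

theorem PosSemidef.sqrt_mul_self (hA : A.PosSemidef) : hA.sqrt * hA.sqrt = A := by
  conv_rhs => rw [hA.1.spectral_theorem, Unitary.conjStarAlgAut_apply]
  have hU : (star hA.1.eigenvectorUnitary : Matrix n n 𝕜) * hA.1.eigenvectorUnitary = 1 :=
    UnitaryGroup.star_mul_self _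
  simp only [sqrt, Matrix.mul_assoc]
  rw [← Matrix.mul_assoc (star _), hU, Matrix.one_mul, ← Matrix.mul_assoc (diagonal _),
    diagonal_mul_diagonal]
  congr 3
  ext j
  simp [← RCLike.ofReal_mul, Real.mul_self_sqrt (hA.eigenvalues_nonneg j)]

theorem PosSemidef.conjTranspose_sqrt (hA : A.PosSemidef) : hA.sqrtᴴ = hA.sqrt := by
  simp only [sqrt, conjTranspose_mul, star_eq_conjTranspose, conjTranspose_conjTranspose,
    diagonal_conjTranspose, Matrix.mul_assoc]
  congr 3
  funext j
  exact RCLike.conj_ofReal _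

theorem PosDef.isUnit_sqrt (hA : A.PosDef) : IsUnit hA.posSemidef.sqrt :=
  isUnit_of_mul_isUnit_left (hA.posSemidef.sqrt_mul_self ▸ hA.isUnit)

end RCLike

theorem PosDef.sqrt_mul_mul_sqrt_isProjection {A P : Matrix n n ℝ} (hA : A.PosDef)
    (hP : P.IsSymm) (hPAP : P * A * P = P) :
    (hA.posSemidef.sqrt * P * hA.posSemidef.sqrt)ᵀ = hA.posSemidef.sqrt * P * hA.posSemidef.sqrt ∧
      IsIdempotentElem (hA.posSemidef.sqrt * P * hA.posSemidef.sqrt) ∧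
      (hA.posSemidef.sqrt * P * hA.posSemidef.sqrt).rank = P.rank := by
  have hQ : hA.posSemidef.sqrtᵀ = hA.posSemidef.sqrt := by
    simpa using hA.posSemidef.conjTranspose_sqrt
  have hQdet : IsUnit hA.posSemidef.sqrt.det := (isUnit_iff_isUnit_det _).mp hA.isUnit_sqrt
  refine ⟨?_, isIdempotentElem_mul_mul_of_mul_mul_mul_eq (by rwa [hA.posSemidef.sqrt_mul_self]), ?_⟩
  · simp only [transpose_mul, hQ, hP.eq, Matrix.mul_assoc]
  · rw [rank_mul_eq_left_of_isUnit_det _ _ hQdet, rank_mul_eq_right_of_isUnit_det _ _ hQdet]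

end Sqrt

section Blocks

variable {m n R : Type*} [Fintype m] [Fintype n] [DecidableEq m]

theorem rank_fromBlocks_one_zero_zero [Field R] (C : Matrix n m R) :
    (fromBlocks 1 0 C 0 : Matrix (m ⊕ n) (m ⊕ n) R).rank = Fintype.card m := by
  apply le_antisymm
  · have hfac : (fromBlocks 1 0 C 0 : Matrix (m ⊕ n) (m ⊕ n) R) =
        fromRows 1 C * fromCols (1 : Matrix m m R) 0 := by
      rw [fromRows_mul_fromCols]; simp
    rw [hfac]
    exact (rank_mul_le_right _ _).trans (rank_le_card_height _)
  · calc Fintype.card m = (1 : Matrix m m R).rank := rank_one.symm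
      _ ≤ _ := rank_submatrix_le (fromBlocks 1 0 C 0) Sum.inl Sum.inl

variable [DecidableEq n] [CommRing R] {A : Matrix m m R} {B : Matrix m n R} {C : Matrix n m R} {D : Matrix n n R}

theorem fromBlocks_zero_inv_mul_fromBlocks (hD : IsUnit D.det) :
    fromBlocks 0 0 0 D⁻¹ * fromBlocks A B C D = fromBlocks 0 0 (D⁻¹ * C) 1 := by
  simp [fromBlocks_multiply, nonsing_inv_mul _ hD]

theorem inv_fromBlocks_sub_mul_fromBlocks (hI : IsUnit (fromBlocks A B C D).det)
    (hD : IsUnit D.det) :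
    ((fromBlocks A B C D)⁻¹ - fromBlocks 0 0 0 D⁻¹) * fromBlocks A B C D =
      fromBlocks 1 0 (-(D⁻¹ * C)) 0 := by
  rw [sub_mul, nonsing_inv_mul _ hI, fromBlocks_zero_inv_mul_fromBlocks hD, ← fromBlocks_one,
    sub_eq_add_neg, fromBlocks_neg, fromBlocks_add]
  simp

theorem inv_fromBlocks_sub_mul_mul_self (hI : IsUnit (fromBlocks A B C D).det)
    (hD : IsUnit D.det) :
    ((fromBlocks A B C D)⁻¹ - fromBlocks 0 0 0 D⁻¹) * fromBlocks A B C D *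
        ((fromBlocks A B C D)⁻¹ - fromBlocks 0 0 0 D⁻¹) =
      (fromBlocks A B C D)⁻¹ - fromBlocks 0 0 0 D⁻¹ := by
  refine sub_mul_mul_sub_of_mul_mul_eq_self (mul_nonsing_inv _ hI) (nonsing_inv_mul _ hI) ?_
  rw [fromBlocks_zero_inv_mul_fromBlocks hD]
  simp [fromBlocks_multiply]

theorem isSymm_inv_fromBlocks_sub (hI : (fromBlocks A B C D).IsSymm) :
    ((fromBlocks A B C D)⁻¹ - fromBlocks 0 0 0 D⁻¹).IsSymm :=
  hI.inv.sub <| IsSymm.fromBlocks isSymm_zero transpose_zero (isSymm_fromBlocks_iff.mp hI).2.2.2.inv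

end Blocks

end Matrix

theorem sqrt_mul_sub_mul_sqrt_is_projection_general {r s : ℕ}
    (G1 : Matrix (Fin r) (Fin r) ℝ) (G2 : Matrix (Fin r) (Fin s) ℝ)
    (G3 : Matrix (Fin s) (Fin s) ℝ)
    (hI : Matrix.PosDef (Matrix.fromBlocks G1 G2 G2ᵀ G3)) :
    ((Matrix.PosSemidef.sqrt hI.posSemidef) *
        ((Matrix.fromBlocks G1 G2 G2ᵀ G3)⁻¹ - Matrix.fromBlocks 0 0 0 G3⁻¹) *
        (Matrix.PosSemidef.sqrt hI.posSemidef))ᵀ =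
      (Matrix.PosSemidef.sqrt hI.posSemidef) *
        ((Matrix.fromBlocks G1 G2 G2ᵀ G3)⁻¹ - Matrix.fromBlocks 0 0 0 G3⁻¹) *
        (Matrix.PosSemidef.sqrt hI.posSemidef) ∧
    ((Matrix.PosSemidef.sqrt hI.posSemidef) *
        ((Matrix.fromBlocks G1 G2 G2ᵀ G3)⁻¹ - Matrix.fromBlocks 0 0 0 G3⁻¹) *
        (Matrix.PosSemidef.sqrt hI.posSemidef)) *
      ((Matrix.PosSemidef.sqrt hI.posSemidef) *
        ((Matrix.fromBlocks G1 G2 G2ᵀ G3)⁻¹ - Matrix.fromBlocks 0 0 0 G3⁻¹) *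
        (Matrix.PosSemidef.sqrt hI.posSemidef)) =
      (Matrix.PosSemidef.sqrt hI.posSemidef) *
        ((Matrix.fromBlocks G1 G2 G2ᵀ G3)⁻¹ - Matrix.fromBlocks 0 0 0 G3⁻¹) *
        (Matrix.PosSemidef.sqrt hI.posSemidef) ∧
    ((Matrix.PosSemidef.sqrt hI.posSemidef) *
        ((Matrix.fromBlocks G1 G2 G2ᵀ G3)⁻¹ - Matrix.fromBlocks 0 0 0 G3⁻¹) *
        (Matrix.PosSemidef.sqrt hI.posSemidef)).rank = r := by
  have hIdet : IsUnit (fromBlocks G1 G2 G2ᵀ G3).det := (isUnit_iff_isUnit_det _).mp hI.isUnit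
  have hG3det : IsUnit G3.det :=
    (isUnit_iff_isUnit_det _).mp (hI.submatrix Sum.inr_injective : G3.PosDef).isUnit
  have hP := isSymm_inv_fromBlocks_sub (isHermitian_iff_isSymm.mp hI.isHermitian)
  obtain ⟨hsymm, hidem, hrank⟩ :=
    hI.sqrt_mul_mul_sqrt_isProjection hP (inv_fromBlocks_sub_mul_mul_self hIdet hG3det)
  refine ⟨hsymm, hidem, hrank.trans ?_⟩
  rw [← rank_mul_eq_left_of_isUnit_det _ _ hIdet, inv_fromBlocks_sub_mul_fromBlocks hIdet hG3det,
    rank_fromBlocks_one_zero_zero, Fintype.card_fin]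

/-- For a symmetric positive-definite block matrix `I = [[G₁, G₂],[ᵗG₂, G₃]]`,
`H := [[0,0],[0,G₃⁻¹]]` and `I^{1/2}` its positive-definite symmetric square root,
the matrix `I^{1/2} (I⁻¹ − H) I^{1/2}` is an orthogonal projection of rank `r`:
it is symmetric and idempotent. -/
theorem sqrt_mul_sub_mul_sqrt_is_projection {r s : ℕ} (hr : 1 ≤ r) (hs : 1 ≤ s)
    (G1 : Matrix (Fin r) (Fin r) ℝ) (G2 : Matrix (Fin r) (Fin s) ℝ)
    (G3 : Matrix (Fin s) (Fin s) ℝ)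
    (hI : Matrix.PosDef (Matrix.fromBlocks G1 G2 G2ᵀ G3)) :
    ((Matrix.PosSemidef.sqrt hI.posSemidef) *
        ((Matrix.fromBlocks G1 G2 G2ᵀ G3)⁻¹ - Matrix.fromBlocks 0 0 0 G3⁻¹) *
        (Matrix.PosSemidef.sqrt hI.posSemidef))ᵀ =
      (Matrix.PosSemidef.sqrt hI.posSemidef) *
        ((Matrix.fromBlocks G1 G2 G2ᵀ G3)⁻¹ - Matrix.fromBlocks 0 0 0 G3⁻¹) *
        (Matrix.PosSemidef.sqrt hI.posSemidef) ∧
    ((Matrix.PosSemidef.sqrt hI.posSemidef) *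
        ((Matrix.fromBlocks G1 G2 G2ᵀ G3)⁻¹ - Matrix.fromBlocks 0 0 0 G3⁻¹) *
        (Matrix.PosSemidef.sqrt hI.posSemidef)) *
      ((Matrix.PosSemidef.sqrt hI.posSemidef) *
        ((Matrix.fromBlocks G1 G2 G2ᵀ G3)⁻¹ - Matrix.fromBlocks 0 0 0 G3⁻¹) *
        (Matrix.PosSemidef.sqrt hI.posSemidef)) =
      (Matrix.PosSemidef.sqrt hI.posSemidef) *
        ((Matrix.fromBlocks G1 G2 G2ᵀ G3)⁻¹ - Matrix.fromBlocks 0 0 0 G3⁻¹) *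
        (Matrix.PosSemidef.sqrt hI.posSemidef) ∧
    ((Matrix.PosSemidef.sqrt hI.posSemidef) *
        ((Matrix.fromBlocks G1 G2 G2ᵀ G3)⁻¹ - Matrix.fromBlocks 0 0 0 G3⁻¹) *
        (Matrix.PosSemidef.sqrt hI.posSemidef)).rank = r :=
  sqrt_mul_sub_mul_sqrt_is_projection_general G1 G2 G3 hI
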